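/- Let c ∈ F_{2^d} \ F_2 with d = gcd(2i, n) = gcd(i, n) < n, let n be even, and let u be the multiplicative inverse of 2^i + 1 modulo 2^n − 1. Then the compositional inverse of G(x) = (x + tr(x^{2^i+1}))^{2^i+1} is G^{-1}(x) = x^u + tr(x), and the c-differential uniformity of G^{-1} is at most 2. -/

import Mathlib

/-- The absolute trace from `F_{2^n}` to its prime field, computed inside the field. -/
noncomputable def aTr {K : Type} [CommRing K] (n : ℕ) (x : K) : K :=
  ∑ k ∈ Finset.range n, x ^ 2 ^ k

/-- The `c`-differential uniformity of `F`. -/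
noncomputable def cDelta {K : Type} [Field K] (c : K) (F : K → K) : ℕ :=
  sSup { k : ℕ | ∃ a b : K, (c = 1 → a ≠ 0) ∧
    k = Nat.card {x : K // F (x + a) + c * F x = b} }

/-!
Write `q = 2 ^ i`. Since `(q + 1) u ≡ 1`, the maps `x ↦ x ^ (q + 1)` and `x ↦ x ^ u` are mutually
inverse permutations, and for `n` even `tr ((x + 1) ^ (q + 1)) = tr (x ^ (q + 1))` because
`tr (x ^ q) = tr x` and `tr 1 = 0`; this gives the compositional inverse.

For the uniformity, the trace of a solution `x` of `G⁻¹ (x + a) + c G⁻¹ x = b` is `0` or `1`, and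
fixing it turns the equation into `(x + a) ^ u + c x ^ u = w` for a constant `w`. With `s = x ^ u`
this reads `(w + c s) ^ (q + 1) + s ^ (q + 1) = a`. Since `c ^ q = c`, the left side times
`(c + 1) ^ 2` is `z ^ (q + 1) + w ^ (q + 1)` with `z = (c + 1) ^ 2 s + c w`, so for `c ≠ 1` it
determines `s`: each trace value carries at most one solution.
-/

section Trace

variable {K : Type} [CommRing K] {n : ℕ}

lemma aTr_pow_two_of_pow_two_pow_eq_self {x : K} (hx : x ^ 2 ^ n = x) :
    aTr n (x ^ 2) = aTr n x := by
  have hshift : aTr n (x ^ 2) + x = aTr n x + x ^ 2 ^ n := by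
    simp only [aTr, ← pow_mul, ← pow_succ']
    have := Finset.sum_range_succ' (fun k => x ^ 2 ^ k) n
    rw [pow_zero, pow_one] at this
    rw [← this, Finset.sum_range_succ]
  rwa [hx, add_left_inj] at hshift

lemma aTr_pow_two_pow (hK : ∀ y : K, y ^ 2 ^ n = y) (i : ℕ) (x : K) :
    aTr n (x ^ 2 ^ i) = aTr n x := by
  induction i with
  | zero => rw [pow_zero, pow_one]
  | succ j ih => rw [pow_succ, pow_mul, aTr_pow_two_of_pow_two_pow_eq_self (hK _), ih]

variable [CharP K 2]

lemma aTr_add (x y : K) : aTr n (x + y) = aTr n x + aTr n y := by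
  simp only [aTr, ← Finset.sum_add_distrib, add_pow_char_pow]

lemma aTr_sq (x : K) : aTr n x ^ 2 = aTr n (x ^ 2) := by
  simp only [aTr, sum_pow_char, ← pow_mul, mul_comm]

lemma aTr_one (hn : Even n) : aTr n (1 : K) = 0 := by
  simp [aTr, CharTwo.natCast_eq_ite, hn]

lemma aTr_eq_zero_or_one [IsDomain K] (hK : ∀ y : K, y ^ 2 ^ n = y) (x : K) :
    aTr n x = 0 ∨ aTr n x = 1 := by
  refine IsIdempotentElem.iff_eq_zero_or_one.mp ?_
  rw [IsIdempotentElem, ← sq, aTr_sq, aTr_pow_two_of_pow_two_pow_eq_self (hK x)]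

lemma aTr_add_one_pow (hK : ∀ y : K, y ^ 2 ^ n = y) (hn : Even n) (i : ℕ) (x : K) :
    aTr n ((x + 1) ^ (2 ^ i + 1)) = aTr n (x ^ (2 ^ i + 1)) := by
  have hexp : (x + 1) ^ (2 ^ i + 1) = x ^ (2 ^ i + 1) + (x ^ 2 ^ i + x) + 1 := by
    rw [pow_succ, add_pow_char_pow, one_pow, pow_succ]; ring
  rw [hexp, aTr_add, aTr_add, aTr_add, aTr_pow_two_pow hK, CharTwo.add_self_eq_zero, aTr_one hn,
    add_zero, add_zero]

end Trace

lemma pow_eq_self_of_modEq_one {M : Type*} [GroupWithZero M] {q e : ℕ}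
    (hM : ∀ y : M, y ^ q = y) (he : e ≡ 1 [MOD q - 1]) (he0 : e ≠ 0) (y : M) : y ^ e = y := by
  rcases eq_or_ne y 0 with rfl | hy
  · exact zero_pow he0
  have hunit : y ^ (q - 1) = 1 := by
    rcases Nat.eq_zero_or_pos q with rfl | hq
    · exact pow_zero y
    · refine mul_right_cancel₀ hy ?_
      rw [← pow_succ, Nat.sub_add_cancel hq, hM, one_mul]
  rw [pow_eq_pow_of_modEq he hunit, pow_one]

lemma pow_pow_eq_self_of_dvd {M : Type*} [Monoid M] {x : M} {p d i : ℕ} (hx : x ^ p ^ d = x)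
    (hdi : d ∣ i) : x ^ p ^ i = x := by
  obtain ⟨e, rfl⟩ := hdi
  rw [pow_mul, ← congrFun (pow_iterate (p ^ d) e)]
  exact Function.IsFixedPt.iterate hx e

section CharTwo

variable {K : Type} [Field K] [CharP K 2] {n i u : ℕ}

lemma injective_add_mul_pow_add_pow (hinj : Function.Injective fun y : K => y ^ (2 ^ i + 1))
    {c : K} (hc : c ^ 2 ^ i = c) (hc1 : c ≠ 1) (b : K) :
    Function.Injective fun s : K => (b + c * s) ^ (2 ^ i + 1) + s ^ (2 ^ i + 1) := by
  have htwo : (2 : K) = 0 := CharTwo.two_eq_zero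
  have hγ : (c + 1) ^ 2 ≠ 0 := pow_ne_zero 2 fun h => hc1 (by linear_combination h - htwo)
  have hγi : ((c + 1) ^ 2) ^ 2 ^ i = (c + 1) ^ 2 := by
    rw [← pow_mul, mul_comm, pow_mul, add_pow_char_pow, hc, one_pow]
  have hscale : ∀ s : K, (c + 1) ^ 2 * ((b + c * s) ^ (2 ^ i + 1) + s ^ (2 ^ i + 1)) =
      ((c + 1) ^ 2 * s + c * b) ^ (2 ^ i + 1) + b ^ (2 ^ i + 1) := by
    intro s
    simp only [pow_succ _ (2 ^ i), add_pow_char_pow, mul_pow, hc, hγi]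
    linear_combination (c * (b ^ 2 ^ i * b - (c + 1) ^ 2 * (s ^ 2 ^ i * s))) * htwo
  intro s s' h
  have hz := hinj (add_right_cancel ((hscale s).symm.trans ((congrArg _ h).trans (hscale s'))))
  exact mul_left_cancel₀ hγ (add_right_cancel hz)

lemma injective_add_pow_add_mul_pow (hu : ∀ y : K, y ^ ((2 ^ i + 1) * u) = y)
    {c : K} (hc : c ^ 2 ^ i = c) (hc1 : c ≠ 1) (a : K) :
    Function.Injective fun y : K => (y + a) ^ u + c * y ^ u := by
  have hroot : ∀ y : K, (y ^ u) ^ (2 ^ i + 1) = y := fun y => by rw [← pow_mul, mul_comm, hu]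
  have hinj : Function.Injective fun y : K => y ^ (2 ^ i + 1) :=
    Function.LeftInverse.injective (g := fun y => y ^ u) fun y => by simp only [← pow_mul, hu]
  have hw : ∀ y : K,
      ((y + a) ^ u + c * y ^ u + c * y ^ u) ^ (2 ^ i + 1) + (y ^ u) ^ (2 ^ i + 1) = a :=
    fun y => by rw [CharTwo.add_cancel_right, hroot, hroot, add_comm y, CharTwo.add_cancel_right]
  intro y y' h
  have hs : y ^ u = y' ^ u := injective_add_mul_pow_add_pow hinj hc hc1 ((y + a) ^ u + c * y ^ u)
    ((hw y).trans (by simp only at h; rw [h]; exact (hw y').symm))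
  rw [← hroot y, hs, hroot]

lemma card_solutions_pow_add_aTr_le_two (hK : ∀ y : K, y ^ 2 ^ n = y)
    (hu : ∀ y : K, y ^ ((2 ^ i + 1) * u) = y) {c : K} (hc : c ^ 2 ^ i = c) (hc1 : c ≠ 1)
    (a b : K) :
    Nat.card {x : K // ((x + a) ^ u + aTr n (x + a)) + c * (x ^ u + aTr n x) = b} ≤ 2 := by
  let trace : {x : K // ((x + a) ^ u + aTr n (x + a)) + c * (x ^ u + aTr n x) = b} →
      ({0, 1} : Set K) := fun x => ⟨aTr n x.1, aTr_eq_zero_or_one hK x.1⟩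
  have htrace : Function.Injective trace := by
    rintro ⟨x, hx⟩ ⟨x', hx'⟩ h
    have ht : aTr n x = aTr n x' := congrArg Subtype.val h
    have hfibre : ∀ y : K, ((y + a) ^ u + aTr n (y + a)) + c * (y ^ u + aTr n y) = b →
        (y + a) ^ u + c * y ^ u = b + aTr n a + (1 + c) * aTr n y := fun y hy => by
      rw [aTr_add] at hy
      linear_combination hy - (aTr n a + (1 + c) * aTr n y) * CharTwo.two_eq_zero (R := K)
    exact Subtype.ext <| injective_add_pow_add_mul_pow hu hc hc1 a <|
      (hfibre x hx).trans (ht ▸ (hfibre x' hx').symm)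
  calc _ ≤ Nat.card ({0, 1} : Set K) := Nat.card_le_card_of_injective trace htrace
    _ ≤ 2 := (Set.ncard_insert_le 0 {1}).trans (by rw [Set.ncard_singleton])

lemma leftInverse_pow_add_aTr (hK : ∀ y : K, y ^ 2 ^ n = y) (hn : Even n)
    (hu : ∀ y : K, y ^ ((2 ^ i + 1) * u) = y) :
    Function.LeftInverse (fun x : K => x ^ u + aTr n x)
      (fun x : K => (x + aTr n (x ^ (2 ^ i + 1))) ^ (2 ^ i + 1)) := by
  intro x
  simp only [← pow_mul, hu]
  rcases aTr_eq_zero_or_one hK (x ^ (2 ^ i + 1)) with ht | ht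
  · rw [ht, add_zero, ht, add_zero]
  · rw [ht, aTr_add_one_pow hK hn, ht, CharTwo.add_cancel_right]

end CharTwo

lemma cDelta_le_of_forall_card_le {K : Type} [Field K] {c : K} {F : K → K} {k : ℕ}
    (h : ∀ a b : K, Nat.card {x : K // F (x + a) + c * F x = b} ≤ k) : cDelta c F ≤ k :=
  csSup_le' <| by rintro _ ⟨a, b, -, rfl⟩; exact h a b

lemma GaloisField.pow_pow_eq_self (p n : ℕ) [Fact p.Prime] (x : GaloisField p n) :
    x ^ p ^ n = x := by
  rcases eq_or_ne n 0 with rfl | hn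
  · rw [pow_zero, pow_one]
  · have : Fintype (GaloisField p n) := Fintype.ofFinite _
    rw [← Nat.card_eq_fintype_card.symm.trans (GaloisField.card p n hn)]
    exact FiniteField.pow_card x

theorem stmt14_general (n i d u : ℕ) (hne : Even n)
    (hd1 : d = Nat.gcd i n)
    (hu : (2 ^ i + 1) * u ≡ 1 [MOD 2 ^ n - 1])
    (c : GaloisField 2 n) (hc : c ^ 2 ^ d = c) (hc1 : c ≠ 1) :
    Function.LeftInverse (fun x : GaloisField 2 n => x ^ u + aTr n x)
      (fun x : GaloisField 2 n => (x + aTr n (x ^ (2 ^ i + 1))) ^ (2 ^ i + 1)) ∧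
    Function.RightInverse (fun x : GaloisField 2 n => x ^ u + aTr n x)
      (fun x : GaloisField 2 n => (x + aTr n (x ^ (2 ^ i + 1))) ^ (2 ^ i + 1)) ∧
    cDelta c (fun x : GaloisField 2 n => x ^ u + aTr n x) ≤ 2 := by
  have hK := GaloisField.pow_pow_eq_self 2 n
  have hu0 : u ≠ 0 := by
    rintro rfl
    have h2 : 2 ^ n - 1 = 1 := Nat.dvd_one.mp (Nat.modEq_zero_iff_dvd.mp hu.symm)
    have hn1 : n = 1 := Nat.pow_right_injective le_rfl (show 2 ^ n = 2 ^ 1 by rw [pow_one]; omega)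
    exact Nat.not_even_one (hn1 ▸ hne)
  have hpow : ∀ y : GaloisField 2 n, y ^ ((2 ^ i + 1) * u) = y :=
    pow_eq_self_of_modEq_one hK hu (by positivity)
  have hci : c ^ 2 ^ i = c := pow_pow_eq_self_of_dvd hc (hd1 ▸ Nat.gcd_dvd_left i n)
  have hinv := leftInverse_pow_add_aTr hK hne hpow
  exact ⟨hinv, hinv.rightInverse_of_surjective (Finite.surjective_of_injective hinv.injective),
    cDelta_le_of_forall_card_le (card_solutions_pow_add_aTr_le_two hK hpow hci hc1)⟩

/-- with `c ∈ F_{2^d} \ F_2`, `d = gcd(2i,n) = gcd(i,n) < n`, `n`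
even and `u ≡ (2^i+1)^{-1} mod 2^n - 1`, the compositional inverse of
`G(x) = (x + tr(x^{2^i+1}))^{2^i+1}` is `x^u + tr(x)`, whose `c`-differential
uniformity is at most 2. -/
theorem stmt14 (n i d u : ℕ) (hne : Even n)
    (hd2 : d = Nat.gcd (2 * i) n) (hd1 : d = Nat.gcd i n) (hdn : d < n)
    (hu : (2 ^ i + 1) * u ≡ 1 [MOD 2 ^ n - 1])
    (c : GaloisField 2 n) (hc : c ^ 2 ^ d = c) (hc0 : c ≠ 0) (hc1 : c ≠ 1) :
    Function.LeftInverse (fun x : GaloisField 2 n => x ^ u + aTr n x)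
      (fun x : GaloisField 2 n => (x + aTr n (x ^ (2 ^ i + 1))) ^ (2 ^ i + 1)) ∧
    Function.RightInverse (fun x : GaloisField 2 n => x ^ u + aTr n x)
      (fun x : GaloisField 2 n => (x + aTr n (x ^ (2 ^ i + 1))) ^ (2 ^ i + 1)) ∧
    cDelta c (fun x : GaloisField 2 n => x ^ u + aTr n x) ≤ 2 :=
  stmt14_general n i d u hne hd1 hu c hc hc1
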